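/- arXiv:0907.2370 — 3 statements merged into one kernel-verified Lean document; each statement's English description precedes it below -/
import Mathlib

section
/- Let φ be an inner function with φ(0) = 0 and h ∈ H² with ⟨h, h·φ^n⟩ = 0 for all n ≥ 1. Then for every w ∈ 𝔻, ‖h/(1 − conj(w)·φ)‖₂² = ‖h‖₂² / (1 − |w|²). -/
open Complex Metric Filter MeasureTheory intervalIntegral
open scoped Topology

/-!
On the circle `|Φ| = 1`, so with `u = w Φ̄` the Poisson-kernel identity
`(1 - |w|²) / |1 - u|² = 2 Re (1 - u)⁻¹ - 1` holds almost everywhere. Expanding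
`(1 - u)⁻¹` as a geometric series gives `∫ |h|² (1 - u)⁻¹ = ∑ wⁿ ∫ |h|² Φ̄ⁿ`, and the
orthogonality `⟨h, h φⁿ⟩ = ∫ |h|² Φ̄ⁿ = 0` for `n ≥ 1` leaves only `∫ |h|²`.
-/

theorem one_sub_sq_norm_div_sq_norm_one_sub {u : ℂ} (hu : u ≠ 1) :
    (1 - ‖u‖ ^ 2) / ‖1 - u‖ ^ 2 = 2 * (1 - u)⁻¹.re - 1 := by
  have hne : normSq (1 - u) ≠ 0 := (normSq_pos.mpr (sub_ne_zero.mpr hu.symm)).ne'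
  rw [inv_re, Complex.sq_norm, Complex.sq_norm]
  field_simp
  simp only [normSq_apply, sub_re, sub_im, one_re, one_im]
  ring

section

variable {α : Type*} [MeasurableSpace α] {μ : Measure α} {f v : α → ℂ} {c : ℂ}

theorem hasSum_integral_mul_inv_one_sub (hf : Integrable f μ) (hv : AEStronglyMeasurable v μ)
    (hv1 : ∀ᵐ x ∂μ, ‖v x‖ ≤ 1) (hc : ‖c‖ < 1) :
    HasSum (fun n : ℕ => c ^ n * ∫ x, f x * v x ^ n ∂μ) (∫ x, f x * (1 - c * v x)⁻¹ ∂μ) := by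
  have hcv : ∀ᵐ x ∂μ, ‖c * v x‖ ≤ ‖c‖ := by
    filter_upwards [hv1] with x hx
    simpa [norm_mul] using mul_le_of_le_one_right (norm_nonneg c) hx
  have hgeom : HasSum (fun n : ℕ => ‖c‖ ^ n) (1 - ‖c‖)⁻¹ :=
    hasSum_geometric_of_lt_one (norm_nonneg c) hc
  have hsum := hasSum_integral_of_dominated_convergence (μ := μ)
    (F := fun n x => f x * (c * v x) ^ n) (fun n x => ‖f x‖ * ‖c‖ ^ n)
    (fun n => hf.aestronglyMeasurable.mul ((hv.const_mul c).pow n))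
    (fun n => by
      filter_upwards [hcv] with x hx
      rw [norm_mul, norm_pow]
      gcongr)
    (ae_of_all _ fun x => (hgeom.mul_left _).summable)
    (by simpa only [(hgeom.mul_left _).tsum_eq] using hf.norm.mul_const _)
    (by
      filter_upwards [hcv] with x hx
      exact (hasSum_geometric_of_norm_lt_one (hx.trans_lt hc)).mul_left (f x))
  have hterm : (fun n : ℕ => c ^ n * ∫ x, f x * v x ^ n ∂μ)
      = fun n => ∫ x, f x * (c * v x) ^ n ∂μ := by
    funext n
    rw [← MeasureTheory.integral_const_mul]
    congr with x
    ring
  exact hterm ▸ hsum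

theorem integral_mul_inv_one_sub_eq_integral (hf : Integrable f μ)
    (hv : AEStronglyMeasurable v μ) (hv1 : ∀ᵐ x ∂μ, ‖v x‖ ≤ 1) (hc : ‖c‖ < 1)
    (hmom : ∀ n : ℕ, 1 ≤ n → ∫ x, f x * v x ^ n ∂μ = 0) :
    ∫ x, f x * (1 - c * v x)⁻¹ ∂μ = ∫ x, f x ∂μ := by
  refine (hasSum_integral_mul_inv_one_sub hf hv hv1 hc).unique ?_
  convert hasSum_single (f := fun n : ℕ => c ^ n * ∫ x, f x * v x ^ n ∂μ) 0 fun n hn => by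
    rw [hmom n (Nat.one_le_iff_ne_zero.mpr hn), mul_zero]
  simp

theorem integral_sq_norm_div_one_sub {g : α → ℂ} (hg : Integrable (fun x => ‖g x‖ ^ 2) μ)
    (hv : AEStronglyMeasurable v μ) (hv1 : ∀ᵐ x ∂μ, ‖v x‖ = 1) (hc : ‖c‖ < 1)
    (hmom : ∀ n : ℕ, 1 ≤ n → ∫ x, ((‖g x‖ ^ 2 : ℝ) : ℂ) * v x ^ n ∂μ = 0) :
    ∫ x, ‖g x / (1 - c * v x)‖ ^ 2 ∂μ = (∫ x, ‖g x‖ ^ 2 ∂μ) / (1 - ‖c‖ ^ 2) := by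
  have hcv : ∀ᵐ x ∂μ, ‖c * v x‖ = ‖c‖ := by
    filter_upwards [hv1] with x hx
    rw [norm_mul, hx, mul_one]
  have hint : Integrable (fun x => ((‖g x‖ ^ 2 : ℝ) : ℂ) * (1 - c * v x)⁻¹) μ := by
    refine hg.ofReal.mul_bdd (c := (1 - ‖c‖)⁻¹)
      (aestronglyMeasurable_const.sub (hv.const_mul c)).aemeasurable.inv.aestronglyMeasurable ?_
    filter_upwards [hcv] with x hx
    rw [norm_inv]
    refine inv_anti₀ (sub_pos.mpr hc) ?_
    have := norm_sub_norm_le (1 : ℂ) (c * v x)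
    rw [norm_one, hx] at this
    linarith
  have hint_re : Integrable (fun x => ‖g x‖ ^ 2 * (1 - c * v x)⁻¹.re) μ := by
    simpa only [RCLike.re_to_complex, re_ofReal_mul] using hint.re
  have hre : ∫ x, ‖g x‖ ^ 2 * (1 - c * v x)⁻¹.re ∂μ = ∫ x, ‖g x‖ ^ 2 ∂μ := by
    calc ∫ x, ‖g x‖ ^ 2 * (1 - c * v x)⁻¹.re ∂μ
        = (∫ x, ((‖g x‖ ^ 2 : ℝ) : ℂ) * (1 - c * v x)⁻¹ ∂μ).re := by
          rw [← RCLike.re_to_complex, ← integral_re hint]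
          simp only [RCLike.re_to_complex, re_ofReal_mul]
      _ = (∫ x, ((‖g x‖ ^ 2 : ℝ) : ℂ) ∂μ).re :=
          congrArg re (integral_mul_inv_one_sub_eq_integral hg.ofReal hv
            (hv1.mono fun x hx => hx.le) hc hmom)
      _ = ∫ x, ‖g x‖ ^ 2 ∂μ := congrArg re _root_.integral_ofReal
  have hpoisson : ∀ᵐ x ∂μ, ‖g x / (1 - c * v x)‖ ^ 2
      = (2 * (‖g x‖ ^ 2 * (1 - c * v x)⁻¹.re) - ‖g x‖ ^ 2) / (1 - ‖c‖ ^ 2) := by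
    filter_upwards [hcv] with x hx
    have hne : c * v x ≠ 1 := fun h => by rw [h, norm_one] at hx; linarith
    have hden : ‖1 - c * v x‖ ≠ 0 := norm_ne_zero_iff.mpr (sub_ne_zero.mpr hne.symm)
    have hden' : 1 - ‖c‖ ^ 2 ≠ 0 := by nlinarith [norm_nonneg c]
    calc ‖g x / (1 - c * v x)‖ ^ 2
        = ‖g x‖ ^ 2 * ((1 - ‖c * v x‖ ^ 2) / ‖1 - c * v x‖ ^ 2) / (1 - ‖c‖ ^ 2) := by
          rw [hx, norm_div, div_pow]
          field_simp
      _ = _ := by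
          rw [one_sub_sq_norm_div_sq_norm_one_sub hne]
          ring
  rw [integral_congr_ae hpoisson, MeasureTheory.integral_div,
    integral_sub (hint_re.const_mul 2) hg, MeasureTheory.integral_const_mul, hre]
  ring

end

theorem stmt4_general (Φ hb : ℝ → ℂ) (hΦmeas : Measurable Φ)
    (hΦmod : ∀ᵐ θ : ℝ ∂(volume.restrict (Set.Ioc (0:ℝ) (2*Real.pi))), ‖Φ θ‖ = 1)
    (hbL2 : IntegrableOn (fun θ => ‖hb θ‖ ^ 2) (Set.Ioc (0:ℝ) (2*Real.pi)))
    (horth : ∀ n : ℕ, 1 ≤ n →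
      ∫ θ in (0:ℝ)..(2*Real.pi), hb θ * (starRingEnd ℂ) (hb θ * Φ θ ^ n) = 0) :
    ∀ w ∈ ball (0:ℂ) 1,
      ∫ θ in (0:ℝ)..(2*Real.pi), ‖hb θ / (1 - (starRingEnd ℂ) w * Φ θ)‖ ^ 2
        = (∫ θ in (0:ℝ)..(2*Real.pi), ‖hb θ‖ ^ 2) / (1 - ‖w‖ ^ 2) := by
  intro w hw
  have h2π : (0:ℝ) ≤ 2 * Real.pi := by positivity
  have hmom : ∀ n : ℕ, 1 ≤ n → ∫ θ in Set.Ioc 0 (2 * Real.pi),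
      ((‖hb θ‖ ^ 2 : ℝ) : ℂ) * (starRingEnd ℂ) (Φ θ) ^ n = 0 := by
    intro n hn
    rw [← horth n hn, intervalIntegral.integral_of_le h2π]
    congr with θ
    rw [map_mul, map_pow, ← mul_assoc, Complex.mul_conj, normSq_eq_norm_sq]
  have hconj : ∀ θ, ‖hb θ / (1 - (starRingEnd ℂ) w * Φ θ)‖
      = ‖hb θ / (1 - w * (starRingEnd ℂ) (Φ θ))‖ := fun θ => by
    rw [norm_div, norm_div, ← RCLike.norm_conj (1 - w * _)]
    simp
  simp_rw [hconj, intervalIntegral.integral_of_le h2π]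
  exact integral_sq_norm_div_one_sub hbL2
    (continuous_conj.measurable.comp hΦmeas).aestronglyMeasurable
    (hΦmod.mono fun θ h => by simpa using h) (by simpa using hw) hmom

/-- Let `φ` be inner with `φ 0 = 0` (boundary values `Φ` of modulus `1` a.e.) and
`h ∈ H²` (boundary values `hb`) with `⟨h, h φ^n⟩ = 0` for all `n ≥ 1`. Then for every
`w ∈ 𝔻`, `‖h/(1 - conj w · φ)‖₂² = ‖h‖₂²/(1 - |w|²)` (norms computed on the boundary). -/
theorem stmt4 (φ h : ℂ → ℂ)
    (hφd : DifferentiableOn ℂ φ (ball (0:ℂ) 1))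
    (hφmaps : Set.MapsTo φ (ball (0:ℂ) 1) (ball (0:ℂ) 1))
    (hφ0 : φ 0 = 0)
    (hhd : DifferentiableOn ℂ h (ball (0:ℂ) 1))
    (Φ hb : ℝ → ℂ) (hΦmeas : Measurable Φ) (hbmeas : Measurable hb)
    (hΦlim : ∀ᵐ θ : ℝ ∂(volume.restrict (Set.Ioc (0:ℝ) (2*Real.pi))),
      Tendsto (fun r : ℝ => φ (r * Complex.exp ((θ : ℂ) * Complex.I))) (𝓝[<] 1) (𝓝 (Φ θ)))
    (hblim : ∀ᵐ θ : ℝ ∂(volume.restrict (Set.Ioc (0:ℝ) (2*Real.pi))),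
      Tendsto (fun r : ℝ => h (r * Complex.exp ((θ : ℂ) * Complex.I))) (𝓝[<] 1) (𝓝 (hb θ)))
    (hΦmod : ∀ᵐ θ : ℝ ∂(volume.restrict (Set.Ioc (0:ℝ) (2*Real.pi))), ‖Φ θ‖ = 1)
    (hbL2 : IntegrableOn (fun θ => ‖hb θ‖ ^ 2) (Set.Ioc (0:ℝ) (2*Real.pi)))
    (horth : ∀ n : ℕ, 1 ≤ n →
      ∫ θ in (0:ℝ)..(2*Real.pi), hb θ * (starRingEnd ℂ) (hb θ * Φ θ ^ n) = 0) :
    ∀ w ∈ ball (0:ℂ) 1,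
      ∫ θ in (0:ℝ)..(2*Real.pi), ‖hb θ / (1 - (starRingEnd ℂ) w * Φ θ)‖ ^ 2
        = (∫ θ in (0:ℝ)..(2*Real.pi), ‖hb θ‖ ^ 2) / (1 - ‖w‖ ^ 2) :=
  stmt4_general Φ hb hΦmeas hΦmod hbL2 horth
end

section
/- Let φ(z) = 1 − √(1−z) and h(z) = (1−z)^{-3/8} and f(z) = (1−z)^{-1/4} on the unit disc (principal branches). Then h ∈ H², f ∈ H², h·(f∘φ) equals (1−z)^{-1/2}, and (1−z)^{-1/2} ∉ H². Hence the weighted composition operator W_{h,φ} does not map H² into H². -/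
/-! On the circle `|z| = r` one has `|1 - r e^{iθ}|² = (1 - r)² + 2r(1 - cos θ)`, which Jordan's
inequality bounds below by `(min θ (2π - θ) / π)²` and elementary estimates bound above by
`((1 - r) + θ)²`. For `b < 1/2` the integrands `|1 - z|^{-2b}` of the integral means are therefore
dominated by the integrable function `π^{2b} (θ^{-2b} + (2π - θ)^{-2b})`, uniformly in `r`; for
`b = 1/2` the mean at radius `1 - ε` is at least `(2π)⁻¹ log (1/ε)`, which is unbounded.
On the right half-plane the principal square root halves the argument, so
`((1 - z)^{1/2})^{-1/4} = (1 - z)^{-1/8}`. -/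

open Complex Metric MeasureTheory

/-- The set of integral means `(2π)⁻¹ ∫₀^{2π} ‖g(r e^{iθ})‖² dθ`, `0 ≤ r < 1`. -/
noncomputable def hardyMeans (g : ℂ → ℂ) : Set ℝ :=
  {x | ∃ r : ℝ, 0 ≤ r ∧ r < 1 ∧
    x = (2 * Real.pi)⁻¹ *
      ∫ θ in (0:ℝ)..(2 * Real.pi), ‖g (r * Complex.exp ((θ : ℂ) * Complex.I))‖ ^ 2}

/-- Membership in the Hardy space `H²` of the unit disc. -/
def MemHardy2 (g : ℂ → ℂ) : Prop :=
  DifferentiableOn ℂ g (ball (0:ℂ) 1) ∧ BddAbove (hardyMeans g)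

lemma re_one_sub_pos {z : ℂ} (hz : z ∈ ball (0:ℂ) 1) : 0 < (1 - z).re := by
  rw [mem_ball_zero_iff] at hz
  have := re_le_norm z
  simp only [sub_re, one_re]
  linarith

lemma one_sub_mem_slitPlane {z : ℂ} (hz : z ∈ ball (0:ℂ) 1) : 1 - z ∈ slitPlane :=
  Or.inl (re_one_sub_pos hz)

lemma ofReal_mul_exp_mem_ball {r : ℝ} (hr0 : 0 ≤ r) (hr1 : r < 1) (θ : ℝ) :
    (r : ℂ) * exp (θ * I) ∈ ball (0:ℂ) 1 := by
  simpa [norm_mul, norm_exp_ofReal_mul_I, abs_of_nonneg hr0] using hr1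

lemma differentiableOn_one_sub_cpow (c : ℂ) :
    DifferentiableOn ℂ (fun z => (1 - z) ^ c) (ball (0:ℂ) 1) := fun _ hz =>
  ((differentiableAt_id.const_sub 1).cpow_const (one_sub_mem_slitPlane hz)).differentiableWithinAt

lemma hardyMeans_congr {g g' : ℂ → ℂ} (h : Set.EqOn g g' (ball (0:ℂ) 1)) :
    hardyMeans g = hardyMeans g' := by
  ext x
  refine exists_congr fun r => and_congr_right fun hr0 => and_congr_right fun hr1 => ?_
  rw [intervalIntegral.integral_congr fun θ _ => congrArg (‖·‖ ^ 2)
    (h (ofReal_mul_exp_mem_ball hr0 hr1 θ))]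

lemma MemHardy2.congr {g g' : ℂ → ℂ} (hg : MemHardy2 g) (h : Set.EqOn g g' (ball (0:ℂ) 1)) :
    MemHardy2 g' :=
  ⟨hg.1.congr h.symm, hardyMeans_congr h ▸ hg.2⟩

lemma sq_norm_one_sub_ofReal_mul_exp (r θ : ℝ) :
    ‖1 - (r : ℂ) * exp (θ * I)‖ ^ 2 = (1 - r) ^ 2 + 2 * r * (1 - Real.cos θ) := by
  rw [Complex.sq_norm, normSq_apply]
  simp only [sub_re, sub_im, one_re, one_im, mul_re, mul_im, ofReal_re, ofReal_im,
    exp_ofReal_mul_I_re, exp_ofReal_mul_I_im]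
  linear_combination r ^ 2 * Real.sin_sq_add_cos_sq θ

lemma two_div_pi_sq_mul_min_sq_le_one_sub_cos {θ : ℝ} (hθ0 : 0 ≤ θ) (hθ : θ ≤ 2 * Real.pi) :
    2 / Real.pi ^ 2 * min θ (2 * Real.pi - θ) ^ 2 ≤ 1 - Real.cos θ := by
  have hcos : Real.cos (min θ (2 * Real.pi - θ)) = Real.cos θ := by
    rcases min_choice θ (2 * Real.pi - θ) with h | h <;> rw [h]
    exact Real.cos_two_pi_sub θ
  have hmin : |min θ (2 * Real.pi - θ)| ≤ Real.pi := by
    rw [abs_le]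
    constructor
    · have := Real.pi_pos; exact le_min (by linarith) (by linarith)
    · rcases le_total θ Real.pi with h | h
      · exact (min_le_left _ _).trans h
      · exact (min_le_right _ _).trans (by linarith)
  linarith [Real.cos_le_one_sub_mul_cos_sq hmin]

lemma min_div_pi_le_norm_one_sub_ofReal_mul_exp {r θ : ℝ} (hr0 : 0 ≤ r)
    (hθ0 : 0 ≤ θ) (hθ : θ ≤ 2 * Real.pi) :
    min θ (2 * Real.pi - θ) / Real.pi ≤ ‖1 - (r : ℂ) * exp (θ * I)‖ := by
  have hπ := Real.pi_pos
  have hcos := two_div_pi_sq_mul_min_sq_le_one_sub_cos hθ0 hθ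
  have hhalf : (1 - Real.cos θ) / 2 ≤ ‖1 - (r : ℂ) * exp (θ * I)‖ ^ 2 := by
    rw [sq_norm_one_sub_ofReal_mul_exp]
    have hd : 0 ≤ 1 - Real.cos θ := by linarith [Real.cos_le_one θ]
    nlinarith [mul_nonneg (sq_nonneg (1 - r)) (by linarith [Real.neg_one_le_cos θ] : 0 ≤ 1 + Real.cos θ),
      mul_nonneg hd (by positivity : 0 ≤ r ^ 2 + 2 * r)]
  rw [← sq_le_sq₀ (div_nonneg (le_min hθ0 (by linarith)) hπ.le) (norm_nonneg _)]
  calc (min θ (2 * Real.pi - θ) / Real.pi) ^ 2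
      = 2 / Real.pi ^ 2 * min θ (2 * Real.pi - θ) ^ 2 / 2 := by field_simp
    _ ≤ _ := by linarith

lemma norm_one_sub_ofReal_mul_exp_le {r θ : ℝ} (hr0 : 0 ≤ r) (hr1 : r ≤ 1) (hθ0 : 0 ≤ θ) :
    ‖1 - (r : ℂ) * exp (θ * I)‖ ≤ (1 - r) + θ := by
  rw [← sq_le_sq₀ (norm_nonneg _) (by linarith), sq_norm_one_sub_ofReal_mul_exp]
  nlinarith [Real.one_sub_sq_div_two_le_cos (x := θ)]

lemma sq_norm_cpow_neg_ofReal (w : ℂ) (b : ℝ) : ‖w ^ (-(b : ℂ))‖ ^ 2 = ‖w‖ ^ (-(2 * b)) := by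
  rw [← ofReal_neg, norm_cpow_real, ← Real.rpow_mul_natCast (norm_nonneg w)]
  ring_nf

lemma sq_norm_one_sub_cpow_le {b r θ : ℝ} (hb : 0 ≤ b) (hr : 0 ≤ r)
    (hθ : θ ∈ Set.Ioo 0 (2 * Real.pi)) :
    ‖(1 - (r : ℂ) * exp (θ * I)) ^ (-(b : ℂ))‖ ^ 2 ≤
      Real.pi ^ (2 * b) * (θ ^ (-(2 * b)) + (2 * Real.pi - θ) ^ (-(2 * b))) := by
  obtain ⟨hθ0, hθ⟩ := hθ
  have hπ := Real.pi_pos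
  have hm_le : min θ (2 * Real.pi - θ) ^ (-(2 * b)) ≤ θ ^ (-(2 * b)) + (2 * Real.pi - θ) ^ (-(2 * b)) := by
    have := Real.rpow_nonneg hθ0.le (-(2 * b))
    have := Real.rpow_nonneg (sub_pos.2 hθ).le (-(2 * b))
    rcases min_choice θ (2 * Real.pi - θ) with h | h <;> rw [h] <;> linarith
  set m := min θ (2 * Real.pi - θ)
  have hm : 0 < m := lt_min hθ0 (by linarith)
  rw [sq_norm_cpow_neg_ofReal]
  calc ‖1 - (r : ℂ) * exp (θ * I)‖ ^ (-(2 * b))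
      ≤ (m / Real.pi) ^ (-(2 * b)) := Real.rpow_le_rpow_of_nonpos (by positivity)
        (min_div_pi_le_norm_one_sub_ofReal_mul_exp hr hθ0.le hθ.le) (by linarith)
    _ = Real.pi ^ (2 * b) * m ^ (-(2 * b)) := by
        rw [Real.div_rpow hm.le hπ.le, Real.rpow_neg hπ.le]
        field_simp
    _ ≤ _ := by gcongr

lemma intervalIntegrable_rpow_add_two_pi_sub_rpow {s : ℝ} (hs : -1 < s) :
    IntervalIntegrable (fun θ : ℝ => θ ^ s + (2 * Real.pi - θ) ^ s) volume 0 (2 * Real.pi) := by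
  have h := intervalIntegral.intervalIntegrable_rpow' (a := 0) (b := 2 * Real.pi) hs
  refine h.add ?_
  simpa using (h.comp_sub_left (2 * Real.pi)).symm

lemma continuous_sq_norm_one_sub_cpow {r : ℝ} (hr0 : 0 ≤ r) (hr1 : r < 1) (c : ℂ) :
    Continuous fun θ : ℝ => ‖(1 - (r : ℂ) * exp (θ * I)) ^ c‖ ^ 2 := by
  refine (Continuous.cpow (by fun_prop) continuous_const fun θ => ?_).norm.pow 2
  exact one_sub_mem_slitPlane (ofReal_mul_exp_mem_ball hr0 hr1 θ)

lemma bddAbove_hardyMeans_one_sub_cpow {b : ℝ} (hb0 : 0 ≤ b) (hb : b < 1 / 2) :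
    BddAbove (hardyMeans fun z => (1 - z) ^ (-(b : ℂ))) := by
  refine ⟨(2 * Real.pi)⁻¹ * ∫ θ in (0:ℝ)..(2 * Real.pi),
    Real.pi ^ (2 * b) * (θ ^ (-(2 * b)) + (2 * Real.pi - θ) ^ (-(2 * b))), ?_⟩
  rintro _ ⟨r, hr0, hr1, rfl⟩
  gcongr
  exact intervalIntegral.integral_mono_on_of_le_Ioo (by positivity)
    ((continuous_sq_norm_one_sub_cpow hr0 hr1 _).intervalIntegrable _ _)
    ((intervalIntegrable_rpow_add_two_pi_sub_rpow (by linarith)).const_mul _)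
    fun θ hθ => sq_norm_one_sub_cpow_le hb0 hr0 hθ

lemma memHardy2_one_sub_cpow {b : ℝ} (hb0 : 0 ≤ b) (hb : b < 1 / 2) :
    MemHardy2 fun z => (1 - z) ^ (-(b : ℂ)) :=
  ⟨differentiableOn_one_sub_cpow _, bddAbove_hardyMeans_one_sub_cpow hb0 hb⟩

lemma inv_le_sq_norm_one_sub_cpow_neg_half {r θ : ℝ} (hr0 : 0 ≤ r) (hr1 : r < 1) (hθ : 0 ≤ θ) :
    (1 - r + θ)⁻¹ ≤ ‖(1 - (r : ℂ) * exp (θ * I)) ^ (-((1 / 2 : ℝ) : ℂ))‖ ^ 2 := by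
  have hpos : 0 < ‖1 - (r : ℂ) * exp (θ * I)‖ := norm_pos_iff.2 <|
    slitPlane_ne_zero (one_sub_mem_slitPlane (ofReal_mul_exp_mem_ball hr0 hr1 θ))
  rw [sq_norm_cpow_neg_ofReal, show -(2 * (1 / 2 : ℝ)) = -1 by norm_num, Real.rpow_neg_one]
  exact inv_anti₀ hpos (norm_one_sub_ofReal_mul_exp_le hr0 hr1.le hθ)

lemma neg_log_one_sub_le_integral_sq_norm_one_sub_cpow_neg_half {r : ℝ} (hr0 : 0 ≤ r)
    (hr1 : r < 1) :
    -Real.log (1 - r) ≤ ∫ θ in (0:ℝ)..(2 * Real.pi),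
      ‖(1 - (r : ℂ) * exp (θ * I)) ^ (-((1 / 2 : ℝ) : ℂ))‖ ^ 2 := by
  have hπ := Real.pi_pos
  have hε : 0 < 1 - r := by linarith
  have hcont := continuous_sq_norm_one_sub_cpow hr0 hr1 (-((1 / 2 : ℝ) : ℂ))
  calc -Real.log (1 - r)
      ≤ Real.log ((1 - r + Real.pi) / (1 - r)) := by
        rw [Real.log_div (by positivity) hε.ne']
        linarith [Real.log_nonneg (by linarith [Real.pi_gt_three] : 1 ≤ 1 - r + Real.pi)]
    _ = ∫ θ in (0:ℝ)..Real.pi, (1 - r + θ)⁻¹ := by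
        rw [intervalIntegral.integral_comp_add_left (fun θ => θ⁻¹), add_zero,
          integral_inv_of_pos hε (by positivity)]
    _ ≤ ∫ θ in (0:ℝ)..Real.pi, ‖(1 - (r : ℂ) * exp (θ * I)) ^ (-((1 / 2 : ℝ) : ℂ))‖ ^ 2 := by
        refine intervalIntegral.integral_mono_on hπ.le ?_ (hcont.intervalIntegrable _ _)
          fun θ hθ => inv_le_sq_norm_one_sub_cpow_neg_half hr0 hr1 hθ.1
        refine (ContinuousOn.inv₀ (by fun_prop) fun θ hθ => ?_).intervalIntegrable
        rw [Set.uIcc_of_le hπ.le] at hθ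
        exact (by linarith [hθ.1] : 0 < 1 - r + θ).ne'
    _ ≤ _ := intervalIntegral.integral_mono_interval le_rfl hπ.le (by linarith)
        (Filter.Eventually.of_forall fun θ => by positivity) (hcont.intervalIntegrable _ _)

lemma not_bddAbove_hardyMeans_one_sub_cpow_neg_half :
    ¬ BddAbove (hardyMeans fun z => (1 - z) ^ (-((1 / 2 : ℝ) : ℂ))) := by
  rw [not_bddAbove_iff]
  intro M
  have hπ := Real.pi_pos
  set ε := Real.exp (-(2 * Real.pi * (|M| + 1)))
  have hε0 : 0 < ε := Real.exp_pos _
  have hε1 : ε < 1 := Real.exp_lt_one_iff.2 (by nlinarith [abs_nonneg M])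
  have hr0 : 0 ≤ 1 - ε := by linarith
  have hr1 : 1 - ε < 1 := by linarith
  refine ⟨_, ⟨1 - ε, hr0, hr1, rfl⟩, ?_⟩
  have h := neg_log_one_sub_le_integral_sq_norm_one_sub_cpow_neg_half hr0 hr1
  rw [sub_sub_cancel, Real.log_exp, neg_neg] at h
  rw [lt_inv_mul_iff₀ (by positivity)]
  nlinarith [le_abs_self M]

lemma not_memHardy2_one_sub_cpow_neg_half :
    ¬ MemHardy2 fun z => (1 - z) ^ (-((1 / 2 : ℝ) : ℂ)) :=
  fun h => not_bddAbove_hardyMeans_one_sub_cpow_neg_half h.2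

lemma cpow_ofReal_cpow_of_re_pos {w : ℂ} (hw : 0 < w.re) {s : ℝ} (hs : |s| ≤ 2) (c : ℂ) :
    (w ^ (s : ℂ)) ^ c = w ^ ((s : ℂ) * c) := by
  have harg : |arg w| < Real.pi / 2 := abs_arg_lt_pi_div_two_iff.2 (Or.inl hw)
  have him : |(log w * s).im| < Real.pi := by
    rw [mul_im, log_im, ofReal_re, ofReal_im, mul_zero, zero_add, abs_mul]
    nlinarith [abs_nonneg (arg w)]
  rw [cpow_mul c (by linarith [(abs_lt.1 him).1]) (abs_lt.1 him).2.le]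

lemma one_sub_cpow_mul_one_sub_one_sub_sqrt_cpow {z : ℂ} (hz : z ∈ ball (0:ℂ) 1) :
    (1 - z) ^ (-(3:ℂ)/8) * (1 - (1 - (1 - z) ^ ((1:ℂ)/2))) ^ (-(1:ℂ)/4)
      = (1 - z) ^ (-(1:ℂ)/2) := by
  have hre := re_one_sub_pos hz
  have hsqrt : (1:ℂ) / 2 = ((1 / 2 : ℝ) : ℂ) := by push_cast; ring
  rw [sub_sub_cancel, hsqrt, cpow_ofReal_cpow_of_re_pos hre (by norm_num [abs_of_pos]),
    ← cpow_add _ _ (slitPlane_ne_zero (one_sub_mem_slitPlane hz))]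
  push_cast
  ring_nf

/-- With `φ(z) = 1 - √(1-z)`, `h(z) = (1-z)^{-3/8}` and `f(z) = (1-z)^{-1/4}` (principal
branches): `h ∈ H²`, `f ∈ H²`, `h·(f∘φ) = (1-z)^{-1/2}` on `𝔻`, and `(1-z)^{-1/2} ∉ H²`;
hence `W_{h,φ}` does not map `H²` into `H²`. -/
theorem stmt8 :
    MemHardy2 (fun z => (1 - z) ^ (-(3:ℂ)/8)) ∧
    MemHardy2 (fun z => (1 - z) ^ (-(1:ℂ)/4)) ∧
    (∀ z ∈ ball (0:ℂ) 1,
      (1 - z) ^ (-(3:ℂ)/8) * (1 - (1 - (1 - z) ^ ((1:ℂ)/2))) ^ (-(1:ℂ)/4)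
        = (1 - z) ^ (-(1:ℂ)/2)) ∧
    ¬ MemHardy2 (fun z => (1 - z) ^ (-(1:ℂ)/2)) ∧
    ¬ MemHardy2 (fun z =>
        (1 - z) ^ (-(3:ℂ)/8) * (1 - (1 - (1 - z) ^ ((1:ℂ)/2))) ^ (-(1:ℂ)/4)) := by
  have hW : ∀ z ∈ ball (0:ℂ) 1,
      (1 - z) ^ (-(3:ℂ)/8) * (1 - (1 - (1 - z) ^ ((1:ℂ)/2))) ^ (-(1:ℂ)/4)
        = (1 - z) ^ (-(1:ℂ)/2) :=
    fun _ hz => one_sub_cpow_mul_one_sub_one_sub_sqrt_cpow hz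
  have hnot : ¬ MemHardy2 (fun z => (1 - z) ^ (-(1:ℂ)/2)) := by
    convert not_memHardy2_one_sub_cpow_neg_half using 5
    push_cast
    ring
  refine ⟨?_, ?_, hW, hnot, fun h => hnot (h.congr hW)⟩
  · convert memHardy2_one_sub_cpow (b := 3 / 8) (by norm_num) (by norm_num) using 4
    push_cast
    ring
  · convert memHardy2_one_sub_cpow (b := 1 / 4) (by norm_num) (by norm_num) using 4
    push_cast
    ring
end

section
/- Suppose φ : 𝔻 → 𝔻 is holomorphic with bounded C_φ on H², and h ∈ H² satisfies: for every ε > 0 there is δ > 0 with |h| ≤ ε a.e. on {ζ ∈ 𝕋 : |φ(ζ)| ≥ 1−δ}. Then ‖(1−|w|²)^{1/2} h/(1 − conj(w)φ)‖₂ → 0 as |w| → 1⁻. -/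
open Complex Metric Filter MeasureTheory
open scoped Topology

/-!
Split the integral according to whether `|Φ| ≥ 1 - δ`. There `|b| ≤ ε`, and the normalized
kernel integrates to at most `C` (boundedness of `C_φ`), giving `ε² C`. Elsewhere
`|1 - w̄ Φ| ≥ δ`, giving at most `(1 - |w|²) ‖b‖₂² / δ²`, which vanishes as `|w| → 1`.
-/

/-- `|k_w(z)|² / ‖k_w‖²` for the Szegő kernel `k_w(z) = (1 - w̄ z)⁻¹` of `H²`. -/
noncomputable def normalizedKernelSq (w z : ℂ) : ℝ :=
  (1 - ‖w‖ ^ 2) / ‖1 - starRingEnd ℂ w * z‖ ^ 2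

lemma one_sub_norm_mul_norm_le_norm_one_sub (w z : ℂ) :
    1 - ‖w‖ * ‖z‖ ≤ ‖1 - starRingEnd ℂ w * z‖ := by
  simpa [norm_mul] using norm_sub_norm_le (1 : ℂ) (starRingEnd ℂ w * z)

lemma measurable_normalizedKernelSq (w : ℂ) : Measurable (normalizedKernelSq w) := by
  unfold normalizedKernelSq
  fun_prop

section Bounds

variable {w z : ℂ}

lemma normalizedKernelSq_nonneg (hw : ‖w‖ ≤ 1) (z : ℂ) : 0 ≤ normalizedKernelSq w z :=
  div_nonneg (sub_nonneg.2 (pow_le_one₀ (norm_nonneg w) hw)) (sq_nonneg _)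

lemma normalizedKernelSq_le (hw : ‖w‖ ≤ 1) {d : ℝ} (hd : 0 < d)
    (hdz : d ≤ ‖1 - starRingEnd ℂ w * z‖) :
    normalizedKernelSq w z ≤ (1 - ‖w‖ ^ 2) / d ^ 2 :=
  div_le_div_of_nonneg_left (sub_nonneg.2 (pow_le_one₀ (norm_nonneg w) hw)) (by positivity)
    (pow_le_pow_left₀ hd.le hdz 2)

lemma normalizedKernelSq_le_of_norm_le_one (hw : ‖w‖ < 1) (hz : ‖z‖ ≤ 1) :
    normalizedKernelSq w z ≤ (1 - ‖w‖ ^ 2) / (1 - ‖w‖) ^ 2 := by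
  refine normalizedKernelSq_le hw.le (sub_pos.2 hw)
    ((one_sub_norm_mul_norm_le_norm_one_sub w z).trans' ?_)
  linarith [mul_le_of_le_one_right (norm_nonneg w) hz]

lemma normalizedKernelSq_le_of_norm_lt (hw : ‖w‖ ≤ 1) {δ : ℝ} (hδ : 0 < δ) (hz : ‖z‖ < 1 - δ) :
    normalizedKernelSq w z ≤ (1 - ‖w‖ ^ 2) / δ ^ 2 := by
  refine normalizedKernelSq_le hw hδ ((one_sub_norm_mul_norm_le_norm_one_sub w z).trans' ?_)
  nlinarith [mul_le_of_le_one_left (norm_nonneg z) hw]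

lemma normalizedKernelSq_mul_norm_sq_le (hw : ‖w‖ ≤ 1) {b : ℂ} {ε δ : ℝ} (hδ : 0 < δ)
    (hb : 1 - δ ≤ ‖z‖ → ‖b‖ ≤ ε) :
    normalizedKernelSq w z * ‖b‖ ^ 2 ≤
      ε ^ 2 * normalizedKernelSq w z + (1 - ‖w‖ ^ 2) / δ ^ 2 * ‖b‖ ^ 2 := by
  have hK := normalizedKernelSq_nonneg hw z
  have hc : 0 ≤ (1 - ‖w‖ ^ 2) / δ ^ 2 :=
    div_nonneg (sub_nonneg.2 (pow_le_one₀ (norm_nonneg w) hw)) (sq_nonneg _)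
  rcases le_or_gt (1 - δ) ‖z‖ with hz | hz
  · have := mul_le_mul_of_nonneg_left (pow_le_pow_left₀ (norm_nonneg b) (hb hz) 2) hK
    linarith [mul_nonneg hc (sq_nonneg ‖b‖)]
  · have := mul_le_mul_of_nonneg_right (normalizedKernelSq_le_of_norm_lt hw hδ hz)
      (sq_nonneg ‖b‖)
    linarith [mul_nonneg (sq_nonneg ε) hK]

end Bounds
section Integral

variable {α : Type*} [MeasurableSpace α] {μ : Measure α} {Φ b : α → ℂ}

lemma ae_norm_normalizedKernelSq_le (hΦle : ∀ᵐ x ∂μ, ‖Φ x‖ ≤ 1) {w : ℂ} (hw : ‖w‖ < 1) :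
    ∀ᵐ x ∂μ, ‖normalizedKernelSq w (Φ x)‖ ≤ (1 - ‖w‖ ^ 2) / (1 - ‖w‖) ^ 2 := by
  filter_upwards [hΦle] with x hx
  rw [Real.norm_of_nonneg (normalizedKernelSq_nonneg hw.le _)]
  exact normalizedKernelSq_le_of_norm_le_one hw hx

lemma integrable_normalizedKernelSq [IsFiniteMeasure μ] (hΦ : AEMeasurable Φ μ)
    (hΦle : ∀ᵐ x ∂μ, ‖Φ x‖ ≤ 1) {w : ℂ} (hw : ‖w‖ < 1) :
    Integrable (fun x => normalizedKernelSq w (Φ x)) μ :=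
  .of_bound ((measurable_normalizedKernelSq w).comp_aemeasurable hΦ).aestronglyMeasurable _
    (ae_norm_normalizedKernelSq_le hΦle hw)

lemma integral_normalizedKernelSq_mul_norm_sq_le [IsFiniteMeasure μ] (hΦ : AEMeasurable Φ μ)
    (hΦle : ∀ᵐ x ∂μ, ‖Φ x‖ ≤ 1) (hb : Integrable (fun x => ‖b x‖ ^ 2) μ) {w : ℂ} (hw : ‖w‖ < 1)
    {ε δ : ℝ} (hδ : 0 < δ) (hbε : ∀ᵐ x ∂μ, 1 - δ ≤ ‖Φ x‖ → ‖b x‖ ≤ ε) :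
    ∫ x, normalizedKernelSq w (Φ x) * ‖b x‖ ^ 2 ∂μ ≤
      ε ^ 2 * ∫ x, normalizedKernelSq w (Φ x) ∂μ
        + (1 - ‖w‖ ^ 2) / δ ^ 2 * ∫ x, ‖b x‖ ^ 2 ∂μ := by
  have hK := integrable_normalizedKernelSq hΦ hΦle hw
  have hbK : Integrable (fun x => normalizedKernelSq w (Φ x) * ‖b x‖ ^ 2) μ :=
    hb.bdd_mul hK.aestronglyMeasurable (ae_norm_normalizedKernelSq_le hΦle hw)
  rw [← integral_const_mul, ← integral_const_mul, ← integral_add (hK.const_mul _)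
    (hb.const_mul _)]
  refine integral_mono_ae hbK ((hK.const_mul _).add (hb.const_mul _)) ?_
  filter_upwards [hbε] with x hx
  exact normalizedKernelSq_mul_norm_sq_le hw.le hδ hx

theorem tendsto_integral_normalizedKernelSq_mul_norm_sq [IsFiniteMeasure μ]
    (hΦ : AEMeasurable Φ μ) (hΦle : ∀ᵐ x ∂μ, ‖Φ x‖ ≤ 1) (hb : Integrable (fun x => ‖b x‖ ^ 2) μ)
    {C : ℝ} (hC : ∀ w : ℂ, ‖w‖ < 1 → ∫ x, normalizedKernelSq w (Φ x) ∂μ ≤ C)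
    (hsmall : ∀ ε > 0, ∃ δ > 0, ∀ᵐ x ∂μ, 1 - δ ≤ ‖Φ x‖ → ‖b x‖ ≤ ε) :
    Tendsto (fun w => ∫ x, normalizedKernelSq w (Φ x) * ‖b x‖ ^ 2 ∂μ)
      (comap (‖·‖) (𝓝[<] 1)) (𝓝 0) := by
  have hw : ∀ᶠ w : ℂ in comap (‖·‖) (𝓝[<] 1), ‖w‖ < 1 :=
    eventually_comap.2 (eventually_nhdsWithin_of_forall fun _ hr _ hw => hw ▸ hr)
  have hdefect : Tendsto (fun w : ℂ => 1 - ‖w‖ ^ 2) (comap (‖·‖) (𝓝[<] 1)) (𝓝 0) := by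
    have : Tendsto (fun r : ℝ => 1 - r ^ 2) (𝓝 1) (𝓝 0) :=
      (by fun_prop : Continuous fun r : ℝ => 1 - r ^ 2).tendsto' 1 0 (by norm_num)
    exact this.comp (tendsto_comap.mono_right nhdsWithin_le_nhds)
  refine tendsto_order.2 ⟨fun a ha => hw.mono fun w hw => ha.trans_le <| integral_nonneg
    fun x => mul_nonneg (normalizedKernelSq_nonneg hw.le _) (sq_nonneg _), fun a ha => ?_⟩
  obtain ⟨ε, hεC, hε⟩ : ∃ ε, ε ^ 2 * C < a / 2 ∧ 0 < ε := by
    have : Tendsto (fun ε : ℝ => ε ^ 2 * C) (𝓝[>] 0) (𝓝 0) :=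
      ((by fun_prop : Continuous fun ε : ℝ => ε ^ 2 * C).tendsto' 0 0 (by simp)).mono_left
        nhdsWithin_le_nhds
    exact ((this.eventually (gt_mem_nhds (half_pos ha))).and self_mem_nhdsWithin).exists
  obtain ⟨δ, hδ, hbε⟩ := hsmall ε hε
  have hsmall_defect : ∀ᶠ w : ℂ in comap (‖·‖) (𝓝[<] 1),
      (1 - ‖w‖ ^ 2) / δ ^ 2 * ∫ x, ‖b x‖ ^ 2 ∂μ < a / 2 := by
    refine ((hdefect.div_const _).mul_const _).eventually (gt_mem_nhds ?_)
    simpa using half_pos ha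
  filter_upwards [hw, hsmall_defect] with w hw hdefect_w
  calc ∫ x, normalizedKernelSq w (Φ x) * ‖b x‖ ^ 2 ∂μ
      ≤ ε ^ 2 * ∫ x, normalizedKernelSq w (Φ x) ∂μ
          + (1 - ‖w‖ ^ 2) / δ ^ 2 * ∫ x, ‖b x‖ ^ 2 ∂μ :=
        integral_normalizedKernelSq_mul_norm_sq_le hΦ hΦle hb hw hδ hbε
    _ ≤ ε ^ 2 * C + (1 - ‖w‖ ^ 2) / δ ^ 2 * ∫ x, ‖b x‖ ^ 2 ∂μ := by gcongr; exact hC w hw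
    _ < a := by linarith

end Integral

theorem stmt14_general
    (Φ hb : ℝ → ℂ) (hΦmeas : Measurable Φ)
    (hΦle : ∀ᵐ θ : ℝ ∂(volume.restrict (Set.Ioc (0:ℝ) (2*Real.pi))), ‖Φ θ‖ ≤ 1)
    (hbL2 : IntegrableOn (fun θ => ‖hb θ‖ ^ 2) (Set.Ioc (0:ℝ) (2*Real.pi)))
    (Cn : ℝ)
    (hCn : ∀ w ∈ ball (0:ℂ) 1,
      (2 * Real.pi)⁻¹ * ∫ θ in (0:ℝ)..(2*Real.pi),
          (1 - ‖w‖ ^ 2) / ‖1 - (starRingEnd ℂ) w * Φ θ‖ ^ 2 ≤ Cn ^ 2)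
    (hsmall : ∀ ε : ℝ, 0 < ε → ∃ δ : ℝ, 0 < δ ∧
      ∀ᵐ θ : ℝ ∂(volume.restrict (Set.Ioc (0:ℝ) (2*Real.pi))),
        1 - δ ≤ ‖Φ θ‖ → ‖hb θ‖ ≤ ε) :
    Tendsto (fun w : ℂ =>
        (2 * Real.pi)⁻¹ * ∫ θ in (0:ℝ)..(2*Real.pi),
          (1 - ‖w‖ ^ 2) * ‖hb θ‖ ^ 2 / ‖1 - (starRingEnd ℂ) w * Φ θ‖ ^ 2)
      (Filter.comap (fun w : ℂ => ‖w‖) (𝓝[<] (1:ℝ))) (𝓝 0) := by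
  have hπ : (0 : ℝ) < 2 * Real.pi := by positivity
  have hC (w : ℂ) (hw : ‖w‖ < 1) :
      ∫ θ in Set.Ioc 0 (2 * Real.pi), normalizedKernelSq w (Φ θ) ≤ 2 * Real.pi * Cn ^ 2 := by
    have := hCn w (mem_ball_zero_iff.2 hw)
    rwa [intervalIntegral.integral_of_le hπ.le, inv_mul_le_iff₀ hπ] at this
  have hlim := (tendsto_integral_normalizedKernelSq_mul_norm_sq hΦmeas.aemeasurable hΦle hbL2
    hC hsmall).const_mul (2 * Real.pi)⁻¹
  rw [mul_zero] at hlim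
  refine hlim.congr fun w => ?_
  simp only [intervalIntegral.integral_of_le hπ.le, normalizedKernelSq, div_mul_eq_mul_div]

/-- Harper's compactness criterion for `W_{h,φ}`: if `φ : 𝔻 → 𝔻` is holomorphic with
boundary values `Φ`, `C_φ` is bounded on `H²` (via the normalized-kernel bound `Cn`),
`h ∈ H²` has square-integrable boundary values `hb`, and for every `ε > 0` there is
`δ > 0` with `|hb| ≤ ε` a.e. on `{|Φ| ≥ 1-δ}`, then
`‖(1-|w|²)^{1/2} h/(1-conj w·φ)‖₂² → 0` as `|w| → 1⁻` (computed on the boundary). -/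
theorem stmt14 (φ h : ℂ → ℂ)
    (hφd : DifferentiableOn ℂ φ (ball (0:ℂ) 1))
    (hφmaps : Set.MapsTo φ (ball (0:ℂ) 1) (ball (0:ℂ) 1))
    (hhd : DifferentiableOn ℂ h (ball (0:ℂ) 1))
    (Φ hb : ℝ → ℂ) (hΦmeas : Measurable Φ) (hbmeas : Measurable hb)
    (hΦlim : ∀ᵐ θ : ℝ ∂(volume.restrict (Set.Ioc (0:ℝ) (2*Real.pi))),
      Tendsto (fun r : ℝ => φ (r * Complex.exp ((θ : ℂ) * Complex.I))) (𝓝[<] 1) (𝓝 (Φ θ)))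
    (hblim : ∀ᵐ θ : ℝ ∂(volume.restrict (Set.Ioc (0:ℝ) (2*Real.pi))),
      Tendsto (fun r : ℝ => h (r * Complex.exp ((θ : ℂ) * Complex.I))) (𝓝[<] 1) (𝓝 (hb θ)))
    (hΦle : ∀ᵐ θ : ℝ ∂(volume.restrict (Set.Ioc (0:ℝ) (2*Real.pi))), ‖Φ θ‖ ≤ 1)
    (hbL2 : IntegrableOn (fun θ => ‖hb θ‖ ^ 2) (Set.Ioc (0:ℝ) (2*Real.pi)))
    (Cn : ℝ) (hCn0 : 0 ≤ Cn)
    (hCn : ∀ w ∈ ball (0:ℂ) 1,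
      (2 * Real.pi)⁻¹ * ∫ θ in (0:ℝ)..(2*Real.pi),
          (1 - ‖w‖ ^ 2) / ‖1 - (starRingEnd ℂ) w * Φ θ‖ ^ 2 ≤ Cn ^ 2)
    (hsmall : ∀ ε : ℝ, 0 < ε → ∃ δ : ℝ, 0 < δ ∧
      ∀ᵐ θ : ℝ ∂(volume.restrict (Set.Ioc (0:ℝ) (2*Real.pi))),
        1 - δ ≤ ‖Φ θ‖ → ‖hb θ‖ ≤ ε) :
    Tendsto (fun w : ℂ =>
        (2 * Real.pi)⁻¹ * ∫ θ in (0:ℝ)..(2*Real.pi),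
          (1 - ‖w‖ ^ 2) * ‖hb θ‖ ^ 2 / ‖1 - (starRingEnd ℂ) w * Φ θ‖ ^ 2)
      (Filter.comap (fun w : ℂ => ‖w‖) (𝓝[<] (1:ℝ))) (𝓝 0) :=
  stmt14_general Φ hb hΦmeas hΦle hbL2 Cn hCn hsmall
end
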